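/- arXiv:2506.04899 — 5 statements merged into one kernel-verified Lean document; each statement's English description precedes it below -/
import Mathlib

section
/- Let A, B be positively graded Noetherian rings over a common field k = A_0 = B_0, R = A ×_k B the fiber product along the canonical projections. For any proper graded ideal I ⊊ A, the contraction of its extension satisfies IR ∩ A = I, where A is identified with its image under ι_1 : A → R, a ↦ (a, f(a)); likewise JR ∩ B = J for any proper graded ideal J ⊊ B. -/
/-! The maps `ι₁`, `ι₂` are split by the two projections of `A × B`, and extending an ideal along
a split ring map and contracting it back gives the ideal itself. -/

noncomputable section

/-- The fiber product `A ×ₖ B = {(a,b) : f a = g b}`, as a subalgebra of `A × B`. -/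
def fiberProd {k A B : Type*} [CommSemiring k] [Semiring A] [Semiring B]
    [Algebra k A] [Algebra k B] (f : A →ₐ[k] k) (g : B →ₐ[k] k) : Subalgebra k (A × B) :=
  AlgHom.equalizer (f.comp (AlgHom.fst k A B)) (g.comp (AlgHom.snd k A B))

/-- The canonical map `ι₁ : A → A ×ₖ B`, `a ↦ (a, f a)`. -/
def fiberProdInl {k A B : Type*} [CommSemiring k] [Semiring A] [Semiring B]
    [Algebra k A] [Algebra k B] (f : A →ₐ[k] k) (g : B →ₐ[k] k) :
    A →ₐ[k] fiberProd f g :=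
  AlgHom.codRestrict ((AlgHom.id k A).prod ((Algebra.ofId k B).comp f)) (fiberProd f g)
    (fun a => by simp [fiberProd, AlgHom.mem_equalizer, Algebra.ofId_apply, AlgHom.commutes])

/-- The canonical map `ι₂ : B → A ×ₖ B`, `b ↦ (g b, b)`. -/
def fiberProdInr {k A B : Type*} [CommSemiring k] [Semiring A] [Semiring B]
    [Algebra k A] [Algebra k B] (f : A →ₐ[k] k) (g : B →ₐ[k] k) :
    B →ₐ[k] fiberProd f g :=
  AlgHom.codRestrict (((Algebra.ofId k A).comp g).prod (AlgHom.id k B)) (fiberProd f g)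
    (fun b => by simp [fiberProd, AlgHom.mem_equalizer, Algebra.ofId_apply, AlgHom.commutes])

theorem Ideal.comap_map_of_leftInverse {R S : Type*} [Semiring R] [Semiring S]
    {f : R →+* S} {g : S →+* R} (h : Function.LeftInverse g f) (I : Ideal R) :
    (I.map f).comap f = I := by
  refine le_antisymm ?_ Ideal.le_comap_map
  calc (I.map f).comap f ≤ (I.comap g).comap f :=
        Ideal.comap_mono (Ideal.map_le_comap_of_inverse f g I h)
    _ = I := by rw [Ideal.comap_comap, (RingHom.ext h : g.comp f = RingHom.id R), Ideal.comap_id]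

section FiberProd

variable {k A B : Type*} [CommSemiring k] [Semiring A] [Semiring B] [Algebra k A] [Algebra k B]
  (f : A →ₐ[k] k) (g : B →ₐ[k] k)

@[simp]
theorem fst_fiberProdInl (a : A) : (fiberProdInl f g a : A × B).1 = a := rfl

@[simp]
theorem snd_fiberProdInr (b : B) : (fiberProdInr f g b : A × B).2 = b := rfl

end FiberProd

theorem fiberProd_comap_map_eq_general {k A B : Type*} [Field k] [CommRing A] [CommRing B]
    [Algebra k A] [Algebra k B]
    (f : A →ₐ[k] k) (g : B →ₐ[k] k)
    (I : Ideal A)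
    (J : Ideal B) :
    Ideal.comap (fiberProdInl f g) (Ideal.map (fiberProdInl f g) I) = I ∧
      Ideal.comap (fiberProdInr f g) (Ideal.map (fiberProdInr f g) J) = J :=
  ⟨Ideal.comap_map_of_leftInverse (f := (fiberProdInl f g : A →+* fiberProd f g))
      (g := ((AlgHom.fst k A B).comp (fiberProd f g).val : fiberProd f g →+* A))
      (fst_fiberProdInl f g) I,
    Ideal.comap_map_of_leftInverse (f := (fiberProdInr f g : B →+* fiberProd f g))
      (g := ((AlgHom.snd k A B).comp (fiberProd f g).val : fiberProd f g →+* B))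
      (snd_fiberProdInr f g) J⟩

/-- Let `A`, `B` be positively graded Noetherian rings over a common field
`k = A₀ = B₀`, `R = A ×ₖ B` the fiber product along the canonical projections. For any proper
graded ideal `I ⊊ A` the contraction of its extension satisfies `IR ∩ A = I` (identifying `A`
with its image under `ι₁ : a ↦ (a, f a)`); likewise `JR ∩ B = J` for any proper graded ideal
`J ⊊ B`. -/
theorem fiberProd_comap_map_eq {k A B : Type*} [Field k] [CommRing A] [CommRing B]
    [Algebra k A] [Algebra k B] [IsNoetherianRing A] [IsNoetherianRing B]
    (𝒜 : ℕ → Submodule k A) (ℬ : ℕ → Submodule k B)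
    [GradedAlgebra 𝒜] [GradedAlgebra ℬ]
    (h𝒜 : 𝒜 0 ≤ LinearMap.range (Algebra.linearMap k A))
    (hℬ : ℬ 0 ≤ LinearMap.range (Algebra.linearMap k B))
    (f : A →ₐ[k] k) (g : B →ₐ[k] k)
    (hf : ∀ i, 0 < i → ∀ a ∈ 𝒜 i, f a = 0)
    (hg : ∀ i, 0 < i → ∀ b ∈ ℬ i, g b = 0)
    (I : Ideal A) (hI : I ≠ ⊤) (hIhom : I.IsHomogeneous 𝒜)
    (J : Ideal B) (hJ : J ≠ ⊤) (hJhom : J.IsHomogeneous ℬ) :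
    Ideal.comap (fiberProdInl f g) (Ideal.map (fiberProdInl f g) I) = I ∧
      Ideal.comap (fiberProdInr f g) (Ideal.map (fiberProdInr f g) J) = J :=
  fiberProd_comap_map_eq_general f g I J
end
end

section
/- With R = A ×_k B the fiber product of positively graded Noetherian k-algebras A and B over the field k, for any proper graded ideal I ⊊ A, the radical of the extended ideal satisfies √(IR) = √I·R ⊕ √(0)_B·R, where √I is the radical of I in A and √(0)_B is the nilradical of B. -/
noncomputable section

/-!
Since `𝒜 0 = k`, a proper homogeneous ideal lies in the irrelevant ideal, hence in `ker f`, and so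
does its radical because `ker f` is prime. For `J ≤ ker f` and `J' ≤ ker g`, the ideal
`J·R + J'·R` is the preimage of `J × J'` under `R ⊆ A × B`, since every `(a, b) ∈ R` with
`f a = 0` splits as `ι₁ a + ι₂ b`. Radicals commute with preimages and with products of ideals,
so `√(I·R)`, the preimage of `√I × √0`, is `√I·R + √0·R`. The sum is direct because `J·R` and
`J'·R` lie in `J × 0` and `0 × J'`.
-/

theorem Ideal.radical_prod {R S : Type*} [CommSemiring R] [CommSemiring S]
    (I : Ideal R) (J : Ideal S) : (I.prod J).radical = I.radical.prod J.radical := by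
  ext ⟨x, y⟩
  simp only [Ideal.mem_radical_iff, Ideal.mem_prod, Prod.pow_mk]
  constructor
  · rintro ⟨n, hx, hy⟩
    exact ⟨⟨n, hx⟩, ⟨n, hy⟩⟩
  · rintro ⟨⟨m, hx⟩, ⟨n, hy⟩⟩
    exact ⟨m + n, I.pow_mem_of_pow_mem hx (m.le_add_right n),
      J.pow_mem_of_pow_mem hy (n.le_add_left m)⟩

section IrrelevantIdeal

open HomogeneousIdeal

variable {ι k A : Type*} [DecidableEq ι] [AddCommMonoid ι] [PartialOrder ι]
    [CanonicallyOrderedAdd ι] [Field k] [CommRing A] [Algebra k A]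
    (𝒜 : ι → Submodule k A) [GradedAlgebra 𝒜]

theorem Ideal.IsHomogeneous.le_irrelevant (h𝒜 : 𝒜 0 ≤ LinearMap.range (Algebra.linearMap k A))
    {J : Ideal A} (hJ : J ≠ ⊤) (hhom : J.IsHomogeneous 𝒜) : J ≤ (irrelevant 𝒜).toIdeal := by
  intro x hx
  obtain ⟨c, hc⟩ := h𝒜 (DirectSum.decompose 𝒜 x 0).2
  have hc_mem : algebraMap k A c ∈ J := hc ▸ hhom 0 hx
  have hc_zero : c = 0 := by
    by_contra hne
    exact hJ (J.eq_top_of_isUnit_mem hc_mem ((IsUnit.mk0 c hne).map (algebraMap k A)))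
  show GradedRing.proj 𝒜 0 x = 0
  rw [GradedRing.proj_apply, ← hc, Algebra.linearMap_apply, hc_zero, map_zero]

theorem irrelevant_le_ker {S F : Type*} [Semiring S] [FunLike F A S] [RingHomClass F A S] (f : F)
    (hf : ∀ i, 0 < i → ∀ a ∈ 𝒜 i, f a = 0) : (irrelevant 𝒜).toIdeal ≤ RingHom.ker f := by
  rw [irrelevant_eq_span, Ideal.span_le]
  simp only [Set.iUnion_subset_iff]
  exact fun i hi a ha ↦ hf i hi a ha

end IrrelevantIdeal

section FiberProd

variable {k A B : Type*} [CommSemiring k] [CommSemiring A] [CommSemiring B]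
    [Algebra k A] [Algebra k B] {f : A →ₐ[k] k} {g : B →ₐ[k] k}

theorem fiberProd.map_fst_eq_map_snd (r : fiberProd f g) : f (r : A × B).1 = g (r : A × B).2 := r.2

@[simp]
theorem fiberProdInl_coe (a : A) :
    (fiberProdInl f g a : A × B) = (a, algebraMap k B (f a)) := rfl

@[simp]
theorem fiberProdInr_coe (b : B) :
    (fiberProdInr f g b : A × B) = (algebraMap k A (g b), b) := rfl

theorem fiberProdInl_add_fiberProdInr {r : fiberProd f g} (hr : f (r : A × B).1 = 0) :
    fiberProdInl f g (r : A × B).1 + fiberProdInr f g (r : A × B).2 = r := by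
  have hr' : g (r : A × B).2 = 0 := fiberProd.map_fst_eq_map_snd r ▸ hr
  ext <;> simp [hr, hr']

theorem map_fiberProdInl_sup_map_fiberProdInr {J : Ideal A} {J' : Ideal B}
    (hJ : J ≤ RingHom.ker f) (hJ' : J' ≤ RingHom.ker g) :
    J.map (fiberProdInl f g) ⊔ J'.map (fiberProdInr f g) =
      (J.prod J').comap (fiberProd f g).val := by
  apply le_antisymm
  · refine sup_le (Ideal.map_le_iff_le_comap.mpr fun a ha ↦ ?_)
      (Ideal.map_le_iff_le_comap.mpr fun b hb ↦ ?_)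
    · simp [Ideal.mem_comap, RingHom.mem_ker.mp (hJ ha), ha]
    · simp [Ideal.mem_comap, RingHom.mem_ker.mp (hJ' hb), hb]
  · intro r hr
    rw [← fiberProdInl_add_fiberProdInr (hJ hr.1)]
    exact add_mem (Ideal.mem_sup_left (Ideal.mem_map_of_mem _ hr.1))
      (Ideal.mem_sup_right (Ideal.mem_map_of_mem _ hr.2))

theorem map_fiberProdInl_eq_comap {J : Ideal A} (hJ : J ≤ RingHom.ker f) :
    J.map (fiberProdInl f g) = (J.prod ⊥).comap (fiberProd f g).val := by
  simpa using map_fiberProdInl_sup_map_fiberProdInr (g := g) hJ bot_le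

theorem map_fiberProdInr_eq_comap {J : Ideal B} (hJ : J ≤ RingHom.ker g) :
    J.map (fiberProdInr f g) = (Ideal.prod ⊥ J).comap (fiberProd f g).val := by
  simpa using map_fiberProdInl_sup_map_fiberProdInr (f := f) bot_le hJ

theorem map_fiberProdInl_inf_map_fiberProdInr {J : Ideal A} {J' : Ideal B}
    (hJ : J ≤ RingHom.ker f) (hJ' : J' ≤ RingHom.ker g) :
    J.map (fiberProdInl f g) ⊓ J'.map (fiberProdInr f g) = ⊥ := by
  rw [map_fiberProdInl_eq_comap hJ, map_fiberProdInr_eq_comap hJ', eq_bot_iff]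
  rintro r ⟨⟨-, hr₂⟩, ⟨hr₁, -⟩⟩
  exact Subtype.ext (Prod.ext hr₁ hr₂)

end FiberProd

theorem fiberProd_radical_map_general {k A B : Type*} [Field k] [CommRing A] [CommRing B]
    [Algebra k A] [Algebra k B]
    (𝒜 : ℕ → Submodule k A)
    [GradedAlgebra 𝒜]
    (h𝒜 : 𝒜 0 ≤ LinearMap.range (Algebra.linearMap k A))
    (f : A →ₐ[k] k) (g : B →ₐ[k] k)
    (hf : ∀ i, 0 < i → ∀ a ∈ 𝒜 i, f a = 0)
    (I : Ideal A) (hI : I ≠ ⊤) (hIhom : I.IsHomogeneous 𝒜) :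
    (Ideal.map (fiberProdInl f g) I).radical
        = Ideal.map (fiberProdInl f g) I.radical ⊔ Ideal.map (fiberProdInr f g) (nilradical B) ∧
      Ideal.map (fiberProdInl f g) I.radical ⊓ Ideal.map (fiberProdInr f g) (nilradical B) = ⊥ := by
  have hI_ker : I ≤ RingHom.ker f :=
    (hIhom.le_irrelevant 𝒜 h𝒜 hI).trans (irrelevant_le_ker 𝒜 f hf)
  have hrad_ker : I.radical ≤ RingHom.ker f := (RingHom.ker_isPrime f).radical_le_iff.mpr hI_ker
  have hnil_ker : nilradical B ≤ RingHom.ker g := (RingHom.ker_isPrime g).radical_le_iff.mpr bot_le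
  refine ⟨?_, map_fiberProdInl_inf_map_fiberProdInr hrad_ker hnil_ker⟩
  rw [map_fiberProdInl_eq_comap hI_ker, ← Ideal.comap_radical, Ideal.radical_prod,
    ← Ideal.zero_eq_bot, ← nilradical, map_fiberProdInl_sup_map_fiberProdInr hrad_ker hnil_ker]

/-- With `R = A ×ₖ B` the fiber product of positively graded Noetherian
`k`-algebras over the field `k`, for any proper graded ideal `I ⊊ A` the radical of the
extended ideal satisfies `√(IR) = √I·R ⊕ √(0)_B·R`, where `√I` is the radical of `I` in `A`
and `√(0)_B` is the nilradical of `B`. -/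
theorem fiberProd_radical_map {k A B : Type*} [Field k] [CommRing A] [CommRing B]
    [Algebra k A] [Algebra k B] [IsNoetherianRing A] [IsNoetherianRing B]
    (𝒜 : ℕ → Submodule k A) (ℬ : ℕ → Submodule k B)
    [GradedAlgebra 𝒜] [GradedAlgebra ℬ]
    (h𝒜 : 𝒜 0 ≤ LinearMap.range (Algebra.linearMap k A))
    (hℬ : ℬ 0 ≤ LinearMap.range (Algebra.linearMap k B))
    (f : A →ₐ[k] k) (g : B →ₐ[k] k)
    (hf : ∀ i, 0 < i → ∀ a ∈ 𝒜 i, f a = 0)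
    (hg : ∀ i, 0 < i → ∀ b ∈ ℬ i, g b = 0)
    (I : Ideal A) (hI : I ≠ ⊤) (hIhom : I.IsHomogeneous 𝒜) :
    (Ideal.map (fiberProdInl f g) I).radical
        = Ideal.map (fiberProdInl f g) I.radical ⊔ Ideal.map (fiberProdInr f g) (nilradical B) ∧
      Ideal.map (fiberProdInl f g) I.radical ⊓ Ideal.map (fiberProdInr f g) (nilradical B) = ⊥ :=
  fiberProd_radical_map_general 𝒜 h𝒜 f g hf I hI hIhom
end
end

section
/- Let R = A ×_k B be the fiber product of positively graded Noetherian k-algebras over a field k, and let M be a graded A-module regarded as an R-module via the projection π_1 : R → A, (a,b) ↦ a. If (α, β) ∈ tr_R(M) is a homogeneous element of the trace ideal, then β annihilates m_B, i.e. β ∈ (0 :_B m_B). -/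
theorem Module.annihilator_le_annihilator_iSup_range {R M N : Type*} [Semiring R]
    [AddCommMonoid M] [Module R M] [AddCommMonoid N] [Module R N] :
    Module.annihilator R M ≤ (⨆ φ : M →ₗ[R] N, LinearMap.range φ).annihilator := by
  rw [Submodule.annihilator_iSup]
  exact le_iInf fun φ => φ.rangeRestrict.annihilator_le_of_surjective φ.surjective_rangeRestrict

theorem zero_prod_mem_fiberProd_iff {k A B : Type*} [CommSemiring k] [Semiring A] [Semiring B]
    [Algebra k A] [Algebra k B] {f : A →ₐ[k] k} {g : B →ₐ[k] k} {b : B} :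
    ((0 : A), b) ∈ fiberProd f g ↔ b ∈ RingHom.ker g := by
  simp [fiberProd, AlgHom.mem_equalizer, eq_comm]

theorem fiberProd_trace_snd_mem_annihilator_general {k A B : Type*} [Field k] [CommRing A] [CommRing B]
    [Algebra k A] [Algebra k B]
    (f : A →ₐ[k] k) (g : B →ₐ[k] k)
    (M : Type*) [AddCommGroup M] [Module A M]
    -- the `R`-module structure on `M` given by restriction of scalars along `π₁`
    [Module (fiberProd f g) M]
    (hcomp : ∀ (r : fiberProd f g) (x : M), r • x = ((r : A × B).1) • x)
    (x : fiberProd f g)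
    (hx : x ∈ ⨆ φ : M →ₗ[fiberProd f g] fiberProd f g, LinearMap.range φ) :
    (x : A × B).2 ∈ (RingHom.ker g : Ideal B).annihilator := by
  refine Submodule.mem_annihilator.2 fun b hb => ?_
  let r : fiberProd f g := ⟨((0 : A), b), zero_prod_mem_fiberProd_iff.2 hb⟩
  have hr : r ∈ Module.annihilator (fiberProd f g) M :=
    Module.mem_annihilator.2 fun m => (hcomp r m).trans (zero_smul A m)
  have hrx : r * x = 0 :=
    Submodule.mem_annihilator.1 (Module.annihilator_le_annihilator_iSup_range hr) x hx
  simpa [r, mul_comm] using congrArg (fun y : fiberProd f g => (y : A × B).2) hrx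

/-- Let `R = A ×ₖ B` be the fiber product of positively graded Noetherian
`k`-algebras over a field `k`, and let `M` be a graded `A`-module regarded as an `R`-module
via the projection `π₁ : R → A`. If `(α, β) ∈ tr_R(M)` is a homogeneous element of the trace
ideal, then `β` annihilates `m_B = ker g`, i.e. `β ∈ (0 :_B m_B)`. -/
theorem fiberProd_trace_snd_mem_annihilator {k A B : Type*} [Field k] [CommRing A] [CommRing B]
    [Algebra k A] [Algebra k B] [IsNoetherianRing A] [IsNoetherianRing B]
    (𝒜 : ℕ → Submodule k A) (ℬ : ℕ → Submodule k B)
    [GradedAlgebra 𝒜] [GradedAlgebra ℬ]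
    (h𝒜 : 𝒜 0 ≤ LinearMap.range (Algebra.linearMap k A))
    (hℬ : ℬ 0 ≤ LinearMap.range (Algebra.linearMap k B))
    (f : A →ₐ[k] k) (g : B →ₐ[k] k)
    (hf : ∀ i, 0 < i → ∀ a ∈ 𝒜 i, f a = 0)
    (hg : ∀ i, 0 < i → ∀ b ∈ ℬ i, g b = 0)
    (M : Type*) [AddCommGroup M] [Module A M]
    -- `M` is graded as an `A`-module
    (𝓜 : ℕ → AddSubgroup M) [DirectSum.Decomposition 𝓜]
    (hgr : ∀ i j, ∀ a ∈ 𝒜 i, ∀ x ∈ 𝓜 j, a • x ∈ 𝓜 (i + j))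
    -- the `R`-module structure on `M` given by restriction of scalars along `π₁`
    [Module (fiberProd f g) M]
    (hcomp : ∀ (r : fiberProd f g) (x : M), r • x = ((r : A × B).1) • x)
    (x : fiberProd f g)
    (hx : x ∈ ⨆ φ : M →ₗ[fiberProd f g] fiberProd f g, LinearMap.range φ)
    (hhom : ∃ n, (x : A × B).1 ∈ 𝒜 n ∧ (x : A × B).2 ∈ ℬ n) :
    (x : A × B).2 ∈ (RingHom.ker g : Ideal B).annihilator :=
  fiberProd_trace_snd_mem_annihilator_general f g M hcomp x hx
end

section
/- Let R = A ×_k B be the fiber product of positively graded Noetherian k-algebras over a field k with B ≠ B_0 (i.e. B is not equal to its degree-zero part), and let M be a graded A-module viewed as an R-module via the projection π_1 : R → A. Then tr_R(M) ≠ R; that is, M has no R-free direct summand. -/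
/-!
For `b ∈ B` nonzero of positive degree, `(0, b) ∈ A ×ₖ B` is nonzero but kills `M`, since it acts
through `π₁`. An element killing `M` kills the image of every linear form `M → R`, hence all of
`tr_R(M)`, which therefore cannot contain `1`.
-/

set_option synthInstance.maxHeartbeats 1000000
set_option maxHeartbeats 1000000

noncomputable section

/-- The trace ideal `tr_R(M)`. -/
def Module.traceIdeal (R M : Type*) [CommSemiring R] [AddCommMonoid M] [Module R M] : Ideal R :=
  ⨆ φ : M →ₗ[R] R, LinearMap.range φ

section TraceIdeal

variable {R M : Type*} [CommSemiring R] [AddCommMonoid M] [Module R M]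

theorem Module.traceIdeal_le_ker_mulLeft {r : R} (hr : r ∈ Module.annihilator R M) :
    Module.traceIdeal R M ≤ LinearMap.ker (LinearMap.mulLeft R r) :=
  iSup_le fun φ ↦ LinearMap.range_le_ker_iff.2 <| LinearMap.ext fun x ↦ by
    simp [← smul_eq_mul, ← map_smul, Module.mem_annihilator.1 hr x]

theorem Module.traceIdeal_ne_top_of_mem_annihilator {r : R} (hr : r ∈ Module.annihilator R M)
    (hr0 : r ≠ 0) : Module.traceIdeal R M ≠ ⊤ := fun h ↦ by
  have : r * 1 = 0 := Module.traceIdeal_le_ker_mulLeft hr (h ▸ Submodule.mem_top)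
  exact hr0 (by simpa using this)

end TraceIdeal

theorem zero_prod_mem_fiberProd {k A B : Type*} [CommSemiring k] [Semiring A] [Semiring B]
    [Algebra k A] [Algebra k B] (f : A →ₐ[k] k) {g : B →ₐ[k] k} {b : B} (hb : g b = 0) :
    ((0 : A), b) ∈ fiberProd f g := by
  simp [fiberProd, AlgHom.mem_equalizer, hb]

theorem fiberProd_trace_ne_top_general {k A B : Type*} [Field k] [CommRing A] [CommRing B]
    [Algebra k A] [Algebra k B]
    (ℬ : ℕ → Submodule k B)
    (f : A →ₐ[k] k) (g : B →ₐ[k] k)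
    (hg : ∀ i, 0 < i → ∀ b ∈ ℬ i, g b = 0)
    (hB : ∃ i, 0 < i ∧ ℬ i ≠ ⊥)
    (M : Type*) [AddCommGroup M] [Module A M]
    [Module (fiberProd f g) M]
    (hcomp : ∀ (r : fiberProd f g) (x : M), r • x = ((r : A × B).1) • x) :
    (⨆ φ : M →ₗ[fiberProd f g] fiberProd f g, LinearMap.range φ) ≠ ⊤ := by
  obtain ⟨i, hi, hℬi⟩ := hB
  obtain ⟨b, hb, hb0⟩ := Submodule.exists_mem_ne_zero_of_ne_bot hℬi
  let r : fiberProd f g := ⟨(0, b), zero_prod_mem_fiberProd f (hg i hi b hb)⟩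
  refine Module.traceIdeal_ne_top_of_mem_annihilator (r := r) ?_ ?_
  · exact Module.mem_annihilator.2 fun x ↦ by rw [hcomp]; exact zero_smul A x
  · intro hr
    exact hb0 congr(($hr : A × B).2)

/-- Let `R = A ×ₖ B` be the fiber product of positively graded Noetherian
`k`-algebras over a field `k` with `B ≠ B₀`, and let `M` be a graded `A`-module viewed as an
`R`-module via the projection `π₁ : R → A`. Then `tr_R(M) ≠ R`; that is, `M` has no `R`-free
direct summand. -/
theorem fiberProd_trace_ne_top {k A B : Type*} [Field k] [CommRing A] [CommRing B]
    [Algebra k A] [Algebra k B] [IsNoetherianRing A] [IsNoetherianRing B]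
    (𝒜 : ℕ → Submodule k A) (ℬ : ℕ → Submodule k B)
    [GradedAlgebra 𝒜] [GradedAlgebra ℬ]
    (h𝒜 : 𝒜 0 ≤ LinearMap.range (Algebra.linearMap k A))
    (hℬ : ℬ 0 ≤ LinearMap.range (Algebra.linearMap k B))
    (f : A →ₐ[k] k) (g : B →ₐ[k] k)
    (hf : ∀ i, 0 < i → ∀ a ∈ 𝒜 i, f a = 0)
    (hg : ∀ i, 0 < i → ∀ b ∈ ℬ i, g b = 0)
    (hB : ∃ i, 0 < i ∧ ℬ i ≠ ⊥)
    (M : Type*) [AddCommGroup M] [Module A M]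
    (𝓜 : ℕ → AddSubgroup M) [DirectSum.Decomposition 𝓜]
    (hgr : ∀ i j, ∀ a ∈ 𝒜 i, ∀ x ∈ 𝓜 j, a • x ∈ 𝓜 (i + j))
    [Module (fiberProd f g) M]
    (hcomp : ∀ (r : fiberProd f g) (x : M), r • x = ((r : A × B).1) • x) :
    (⨆ φ : M →ₗ[fiberProd f g] fiberProd f g, LinearMap.range φ) ≠ ⊤ :=
  fiberProd_trace_ne_top_general ℬ f g hg hB M hcomp
end
end

section
/- Let R = A ×_k B be the fiber product of positively graded Noetherian k-algebras over a field k. Then the annihilator of m_R decomposes as (0 :_R m_R) = ((0 :_A m_A))·R ⊕ ((0 :_B m_B))·R, where the extensions are via ι_1 and ι_2. -/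
set_option synthInstance.maxHeartbeats 1000000
set_option maxHeartbeats 1000000

noncomputable section

/-- The augmentation `R = A ×ₖ B → k`, `(a,b) ↦ f a (= g b)`. -/
def fiberProdAug {k A B : Type*} [CommSemiring k] [Semiring A] [Semiring B]
    [Algebra k A] [Algebra k B] (f : A →ₐ[k] k) (g : B →ₐ[k] k) :
    fiberProd f g →ₐ[k] k :=
  f.comp ((AlgHom.fst k A B).comp (fiberProd f g).val)

/-!
In a positively graded algebra over a field whose irrelevant ideal `m` is nonzero, the
annihilator of `m` lies in `m`: if `a * x = 0` for a nonzero homogeneous `x` of positive degree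
`i`, the degree-`i` part of this product is `a₀ • x` with `a₀ ∈ k` the constant term of `a`, so
`a₀ = 0`. An element `(a, b)` of `A ×ₖ B` kills `m_R` iff `a` kills `m_A` and `b` kills `m_B`
(test against `(x, 0)` and `(0, y)`); once both annihilators lie in the maximal ideals, such an
element splits as `ι₁ a + ι₂ b` and these two summands meet only in `0`.
-/

section Graded

variable {k A : Type*} [Field k] [CommRing A] [Algebra k A] (𝒜 : ℕ → Submodule k A)
  [GradedAlgebra 𝒜]

theorem apply_eq_apply_decompose_zero {M F : Type*} [AddCommMonoid M] [FunLike F A M]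
    [AddMonoidHomClass F A M] (φ : F) (hφ : ∀ i, 0 < i → ∀ a ∈ 𝒜 i, φ a = 0) (a : A) :
    φ a = φ (DirectSum.decompose 𝒜 a 0) := by
  classical
  conv_lhs => rw [← DirectSum.sum_support_decompose 𝒜 a]
  rw [map_sum, Finset.sum_eq_single 0]
  · exact fun i _ hi => hφ i (Nat.pos_of_ne_zero hi) _ (DirectSum.decompose 𝒜 a i).2
  · intro h0
    rw [DFinsupp.notMem_support_iff.mp h0, ZeroMemClass.coe_zero, map_zero]

theorem annihilator_ker_le_ker (h𝒜 : 𝒜 0 ≤ LinearMap.range (Algebra.linearMap k A))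
    (f : A →ₐ[k] k) (hf : ∀ i, 0 < i → ∀ a ∈ 𝒜 i, f a = 0) (hA : ∃ i, 0 < i ∧ 𝒜 i ≠ ⊥) :
    (RingHom.ker f : Ideal A).annihilator ≤ RingHom.ker f := by
  intro a ha
  obtain ⟨i, hi, hne⟩ := hA
  obtain ⟨x, hx, hx0⟩ := Submodule.exists_mem_ne_zero_of_ne_bot hne
  have hax : a * x = 0 := Submodule.mem_annihilator.mp ha x (hf i hi x hx)
  have ha₀x : (DirectSum.decompose 𝒜 a 0 : A) * x = 0 := by
    have hdeg := DirectSum.coe_decompose_mul_of_right_mem_of_le 𝒜 (a := a) hx le_rfl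
    rwa [hax, Nat.sub_self, DirectSum.decompose_zero, DirectSum.zero_apply,
      ZeroMemClass.coe_zero, eq_comm] at hdeg
  obtain ⟨c, hc⟩ := h𝒜 (DirectSum.decompose 𝒜 a 0).2
  have hc0 : c = 0 := by
    rw [← hc, Algebra.linearMap_apply, ← Algebra.smul_def] at ha₀x
    exact (smul_eq_zero.mp ha₀x).resolve_right hx0
  rw [RingHom.mem_ker, apply_eq_apply_decompose_zero 𝒜 f hf, ← hc, hc0]
  simp

end Graded

theorem Ideal.prod_bot_inf_bot_prod {R S : Type*} [Semiring R] [Semiring S] (I : Ideal R)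
    (J : Ideal S) : I.prod ⊥ ⊓ (⊥ : Ideal R).prod J = ⊥ := by
  refine eq_bot_iff.mpr fun p hp => ?_
  obtain ⟨⟨-, hp2⟩, hp1, -⟩ := And.imp (Ideal.mem_prod _ _).mp (Ideal.mem_prod _ _).mp hp
  exact Ideal.mem_bot.mpr (Prod.ext hp1 hp2)

section FiberProd

variable {k A B : Type*} [CommSemiring k] [CommSemiring A] [CommSemiring B]
  [Algebra k A] [Algebra k B] (f : A →ₐ[k] k) (g : B →ₐ[k] k)

theorem mem_fiberProd {p : A × B} : p ∈ fiberProd f g ↔ f p.1 = g p.2 := Iff.rfl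

@[simp]
theorem coe_fiberProdInl (a : A) :
    ((fiberProdInl f g a : fiberProd f g) : A × B) = (a, algebraMap k B (f a)) := rfl

@[simp]
theorem coe_fiberProdInr (b : B) :
    ((fiberProdInr f g b : fiberProd f g) : A × B) = (algebraMap k A (g b), b) := rfl

theorem annihilator_ker_fiberProdAug :
    (RingHom.ker (fiberProdAug f g) : Ideal (fiberProd f g)).annihilator =
      (((RingHom.ker f : Ideal A).annihilator).prod
        (RingHom.ker g : Ideal B).annihilator).comap (fiberProd f g).val := by
  ext x
  simp only [Ideal.mem_comap, Ideal.mem_prod, Submodule.mem_annihilator, RingHom.mem_ker,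
    Subalgebra.coe_val, smul_eq_mul]
  constructor
  · intro h
    refine ⟨fun a ha => ?_, fun b hb => ?_⟩
    · have hax := congrArg (fun z : fiberProd f g => (z : A × B).1)
        (h ⟨(a, 0), by simp [mem_fiberProd, ha]⟩ ha)
      simpa using hax
    · have hbx := congrArg (fun z : fiberProd f g => (z : A × B).2)
        (h ⟨(0, b), by simp [mem_fiberProd, hb]⟩ (by simp [fiberProdAug]))
      simpa using hbx
  · rintro ⟨h1, h2⟩ y hy
    have hy2 : g (y : A × B).2 = 0 := ((mem_fiberProd f g).mp y.2).symm.trans hy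
    exact Subtype.ext (Prod.ext (h1 _ hy) (h2 _ hy2))

theorem map_fiberProdInl {I : Ideal A} (hI : I ≤ RingHom.ker f) :
    I.map (fiberProdInl f g) = (I.prod ⊥).comap (fiberProd f g).val := by
  refine le_antisymm (Ideal.map_le_iff_le_comap.mpr fun a ha => ?_) fun x hx => ?_
  · simp [Ideal.mem_prod, RingHom.mem_ker.mp (hI ha), ha]
  · obtain ⟨h1, h2⟩ := (Ideal.mem_prod _ _).mp hx
    have hx1 : f (x : A × B).1 = 0 := hI h1
    have hx : x = fiberProdInl f g (x : A × B).1 := Subtype.ext (Prod.ext rfl (by simpa [hx1]))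
    exact hx ▸ Ideal.mem_map_of_mem _ h1

theorem map_fiberProdInr {J : Ideal B} (hJ : J ≤ RingHom.ker g) :
    J.map (fiberProdInr f g) = ((⊥ : Ideal A).prod J).comap (fiberProd f g).val := by
  refine le_antisymm (Ideal.map_le_iff_le_comap.mpr fun b hb => ?_) fun x hx => ?_
  · simp [Ideal.mem_prod, RingHom.mem_ker.mp (hJ hb), hb]
  · obtain ⟨h1, h2⟩ := (Ideal.mem_prod _ _).mp hx
    have hx2 : g (x : A × B).2 = 0 := hJ h2
    have hx : x = fiberProdInr f g (x : A × B).2 := Subtype.ext (Prod.ext (by simpa [hx2]) rfl)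
    exact hx ▸ Ideal.mem_map_of_mem _ h2

theorem fiberProd_comap_prod_bot_sup_bot_prod {I : Ideal A} {J : Ideal B}
    (hI : I ≤ RingHom.ker f) (hJ : J ≤ RingHom.ker g) :
    (I.prod ⊥).comap (fiberProd f g).val ⊔ ((⊥ : Ideal A).prod J).comap (fiberProd f g).val =
      (I.prod J).comap (fiberProd f g).val := by
  refine le_antisymm (sup_le (Ideal.comap_mono (Ideal.prod_mono_right bot_le))
    (Ideal.comap_mono (Ideal.prod_mono_left bot_le))) fun x hx => ?_
  obtain ⟨h1, h2⟩ := (Ideal.mem_prod _ _).mp hx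
  have hx1 : f (x : A × B).1 = 0 := hI h1
  have hx2 : g (x : A × B).2 = 0 := hJ h2
  exact Submodule.mem_sup.mpr
    ⟨⟨((x : A × B).1, 0), by simp [mem_fiberProd, hx1]⟩, (Ideal.mem_prod _ _).mpr ⟨h1, rfl⟩,
      ⟨(0, (x : A × B).2), by simp [mem_fiberProd, hx2]⟩, (Ideal.mem_prod _ _).mpr ⟨rfl, h2⟩,
      Subtype.ext (by simp)⟩

theorem fiberProd_comap_prod_bot_inf_bot_prod (I : Ideal A) (J : Ideal B) :
    (I.prod ⊥).comap (fiberProd f g).val ⊓ ((⊥ : Ideal A).prod J).comap (fiberProd f g).val =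
      ⊥ := by
  rw [← Ideal.comap_inf, Ideal.prod_bot_inf_bot_prod,
    Ideal.comap_bot_of_injective _ Subtype.val_injective]

end FiberProd

theorem fiberProd_annihilator_maximalIdeal_general {k A B : Type*} [Field k] [CommRing A] [CommRing B]
    [Algebra k A] [Algebra k B]
    (𝒜 : ℕ → Submodule k A) (ℬ : ℕ → Submodule k B)
    [GradedAlgebra 𝒜] [GradedAlgebra ℬ]
    (h𝒜 : 𝒜 0 ≤ LinearMap.range (Algebra.linearMap k A))
    (hℬ : ℬ 0 ≤ LinearMap.range (Algebra.linearMap k B))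
    (f : A →ₐ[k] k) (g : B →ₐ[k] k)
    (hf : ∀ i, 0 < i → ∀ a ∈ 𝒜 i, f a = 0)
    (hg : ∀ i, 0 < i → ∀ b ∈ ℬ i, g b = 0)
    (hA : ∃ i, 0 < i ∧ 𝒜 i ≠ ⊥) (hB : ∃ i, 0 < i ∧ ℬ i ≠ ⊥) :
    (RingHom.ker (fiberProdAug f g) : Ideal (fiberProd f g)).annihilator
        = Ideal.map (fiberProdInl f g) ((RingHom.ker f : Ideal A).annihilator)
            ⊔ Ideal.map (fiberProdInr f g) ((RingHom.ker g : Ideal B).annihilator) ∧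
      Ideal.map (fiberProdInl f g) ((RingHom.ker f : Ideal A).annihilator)
          ⊓ Ideal.map (fiberProdInr f g) ((RingHom.ker g : Ideal B).annihilator) = ⊥ := by
  have hmA := annihilator_ker_le_ker 𝒜 h𝒜 f hf hA
  have hmB := annihilator_ker_le_ker ℬ hℬ g hg hB
  rw [annihilator_ker_fiberProdAug, map_fiberProdInl f g hmA, map_fiberProdInr f g hmB]
  exact ⟨(fiberProd_comap_prod_bot_sup_bot_prod f g hmA hmB).symm,
    fiberProd_comap_prod_bot_inf_bot_prod f g _ _⟩

/-- Let `R = A ×ₖ B` be the fiber product of positively graded Noetherian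
`k`-algebras over a field `k`. Then the annihilator of `m_R` decomposes as
`(0 :_R m_R) = (0 :_A m_A)·R ⊕ (0 :_B m_B)·R`, the extensions being taken via `ι₁` and `ι₂`. -/
theorem fiberProd_annihilator_maximalIdeal {k A B : Type*} [Field k] [CommRing A] [CommRing B]
    [Algebra k A] [Algebra k B] [IsNoetherianRing A] [IsNoetherianRing B]
    (𝒜 : ℕ → Submodule k A) (ℬ : ℕ → Submodule k B)
    [GradedAlgebra 𝒜] [GradedAlgebra ℬ]
    (h𝒜 : 𝒜 0 ≤ LinearMap.range (Algebra.linearMap k A))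
    (hℬ : ℬ 0 ≤ LinearMap.range (Algebra.linearMap k B))
    (f : A →ₐ[k] k) (g : B →ₐ[k] k)
    (hf : ∀ i, 0 < i → ∀ a ∈ 𝒜 i, f a = 0)
    (hg : ∀ i, 0 < i → ∀ b ∈ ℬ i, g b = 0)
    (hA : ∃ i, 0 < i ∧ 𝒜 i ≠ ⊥) (hB : ∃ i, 0 < i ∧ ℬ i ≠ ⊥) :
    (RingHom.ker (fiberProdAug f g) : Ideal (fiberProd f g)).annihilator
        = Ideal.map (fiberProdInl f g) ((RingHom.ker f : Ideal A).annihilator)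
            ⊔ Ideal.map (fiberProdInr f g) ((RingHom.ker g : Ideal B).annihilator) ∧
      Ideal.map (fiberProdInl f g) ((RingHom.ker f : Ideal A).annihilator)
          ⊓ Ideal.map (fiberProdInr f g) ((RingHom.ker g : Ideal B).annihilator) = ⊥ :=
  fiberProd_annihilator_maximalIdeal_general 𝒜 ℬ h𝒜 hℬ f g hf hg hA hB
end
end
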